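/- arXiv:2404.02538 — 3 statements merged into one kernel-verified Lean document; each statement's English description precedes it below -/
import Mathlib

section
/- For every t ∈ (0,1) and every x ∈ ℝ^d, the function φ_t is differentiable at x with strictly positive value, and the velocity field satisfies v*(x, t) = (1/t) ∇_x log φ_t(x) + (1/t) x. (Since the density of the law π_t of t X₁ + √(1−t²) X₀ is proportional to φ_t, this says v*(x,t) = (1/t)∇_x log π_t(x) + x/t.) -/
open MeasureTheory

/-- The Gaussian kernel `g_t(x, x₁) = exp(-‖x - t x₁‖² / (2(1-t²)))`. -/
noncomputable def gKer (d : ℕ) (t : ℝ) (x x₁ : EuclideanSpace ℝ (Fin d)) : ℝ :=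
  Real.exp (-‖x - t • x₁‖ ^ 2 / (2 * (1 - t ^ 2)))

/-- `φ_t(x) = ∫ g_t(x, x₁) dπ₁(x₁)`. -/
noncomputable def phiFn (d : ℕ) (π₁ : MeasureTheory.Measure (EuclideanSpace ℝ (Fin d))) (t : ℝ)
    (x : EuclideanSpace ℝ (Fin d)) : ℝ :=
  ∫ x₁, gKer d t x x₁ ∂π₁

/-- `m_t(x) = φ_t(x)⁻¹ ∫ x₁ g_t(x, x₁) dπ₁(x₁)`. -/
noncomputable def mFn (d : ℕ) (π₁ : MeasureTheory.Measure (EuclideanSpace ℝ (Fin d))) (t : ℝ)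
    (x : EuclideanSpace ℝ (Fin d)) : EuclideanSpace ℝ (Fin d) :=
  (phiFn d π₁ t x)⁻¹ • ∫ x₁, gKer d t x x₁ • x₁ ∂π₁

/-- The velocity field `v*(x, t) = (1/(1-t²)) m_t(x) - (t/(1-t²)) x`. -/
noncomputable def vStar (d : ℕ) (π₁ : MeasureTheory.Measure (EuclideanSpace ℝ (Fin d)))
    (x : EuclideanSpace ℝ (Fin d)) (t : ℝ) : EuclideanSpace ℝ (Fin d) :=
  (1 / (1 - t ^ 2)) • mFn d π₁ t x - (t / (1 - t ^ 2)) • x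

open Real

/- For `t ∈ (0,1)` the kernel `g_t(·, x₁)` is a Gaussian bump whose `x`-gradient is
`g_t(x, x₁) (t x₁ - x) / (1 - t²)`. Both `g_t(x, x₁) x₁` and this gradient are bounded uniformly in
`x₁` (and the gradient also in `x`), so one may differentiate under the integral defining `φ_t`:
`∇φ_t(x) = (t ∫ x₁ g_t dπ₁ - φ_t(x) x) / (1 - t²)`, i.e. `∇ log φ_t = (t m_t - x) / (1 - t²)`.
Solving for `m_t` in the definition of `v*` gives the claim. -/

lemma mul_exp_neg_sq_div_le_one {s : ℝ} (hs : 0 < s) (hs1 : s ≤ 1) (u : ℝ) :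
    u * exp (-u ^ 2 / (2 * s)) ≤ 1 := by
  have hu : u ≤ exp (u ^ 2 / (2 * s)) :=
    calc u ≤ u ^ 2 / 2 + 1 := by nlinarith [sq_nonneg (u - 1)]
      _ ≤ u ^ 2 / (2 * s) + 1 := by gcongr; linarith
      _ ≤ exp (u ^ 2 / (2 * s)) := add_one_le_exp _
  rwa [neg_div, exp_neg, ← div_eq_mul_inv, div_le_one (exp_pos _)]

variable {d : ℕ} {t : ℝ}

local notation "E" => EuclideanSpace ℝ (Fin d)

lemma gKer_pos (x x₁ : E) : 0 < gKer d t x x₁ := exp_pos _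

lemma gKer_le_one (ht : t ^ 2 < 1) (x x₁ : E) : gKer d t x x₁ ≤ 1 := by
  rw [gKer, exp_le_one_iff]
  exact div_nonpos_of_nonpos_of_nonneg (by simp) (by linarith)

lemma norm_sub_smul_mul_gKer_le_one (ht : t ^ 2 < 1) (x x₁ : E) :
    ‖x - t • x₁‖ * gKer d t x x₁ ≤ 1 :=
  mul_exp_neg_sq_div_le_one (by linarith) (by nlinarith) _

lemma norm_gKer_smul_le (ht0 : 0 < t) (ht : t ^ 2 < 1) (x x₁ : E) :
    ‖gKer d t x x₁ • x₁‖ ≤ (‖x‖ + 1) / t := by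
  have hg := gKer_pos (t := t) x x₁
  have htri : t * ‖x₁‖ ≤ ‖x‖ + ‖x - t • x₁‖ :=
    calc t * ‖x₁‖ = ‖x - (x - t • x₁)‖ := by
          rw [sub_sub_cancel, norm_smul, norm_of_nonneg ht0.le]
      _ ≤ ‖x‖ + ‖x - t • x₁‖ := norm_sub_le _ _
  rw [norm_smul, norm_of_nonneg hg.le, le_div_iff₀ ht0]
  nlinarith [mul_le_mul_of_nonneg_right htri hg.le,
    mul_le_mul_of_nonneg_left (gKer_le_one ht x x₁) (norm_nonneg x),
    norm_sub_smul_mul_gKer_le_one ht x x₁]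

lemma continuous_gKer (x : E) : Continuous (gKer d t x) := by
  unfold gKer; fun_prop

lemma hasFDerivAt_gKer (x₁ y : E) :
    HasFDerivAt (fun z : E => gKer d t z x₁)
      (innerSL ℝ ((1 - t ^ 2)⁻¹ • (gKer d t y x₁ • (t • x₁ - y)))) y := by
  have hfun : (fun z : E => gKer d t z x₁)
      = fun z => exp (-(2 * (1 - t ^ 2))⁻¹ * ‖z - t • x₁‖ ^ 2) := by
    ext z
    rw [gKer, neg_div, div_eq_inv_mul, neg_mul]
  have hval := congrFun hfun y
  rw [hfun]
  refine (((hasFDerivAt_id y).sub_const (t • x₁)).norm_sq.const_mul _).exp.congr_fderiv ?_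
  ext v
  simp only [id, ← hval]
  simp
  ring

variable (π₁ : Measure (EuclideanSpace ℝ (Fin d)))

lemma integrable_gKer [IsFiniteMeasure π₁] (ht : t ^ 2 < 1) (x : E) :
    Integrable (gKer d t x) π₁ :=
  .of_bound (continuous_gKer x).aestronglyMeasurable 1 <| .of_forall fun x₁ => by
    rw [norm_of_nonneg (gKer_pos x x₁).le]; exact gKer_le_one ht x x₁

lemma integrable_gKer_smul [IsFiniteMeasure π₁] (ht0 : 0 < t) (ht : t ^ 2 < 1) (x : E) :
    Integrable (fun x₁ => gKer d t x x₁ • x₁) π₁ :=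
  .of_bound ((continuous_gKer x).smul continuous_id).aestronglyMeasurable _ <|
    .of_forall (norm_gKer_smul_le ht0 ht x)

lemma phiFn_pos [IsFiniteMeasure π₁] [NeZero π₁] (ht : t ^ 2 < 1) (x : E) :
    0 < phiFn d π₁ t x :=
  integral_exp_pos (integrable_gKer π₁ ht x)

lemma hasFDerivAt_phiFn [IsFiniteMeasure π₁] (ht0 : 0 < t) (ht : t ^ 2 < 1) (x : E) :
    HasFDerivAt (phiFn d π₁ t)
      (innerSL ℝ ((1 - t ^ 2)⁻¹ •
        (t • ∫ x₁, gKer d t x x₁ • x₁ ∂π₁ - phiFn d π₁ t x • x))) x := by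
  have hg := integrable_gKer π₁ ht x
  have hgx := integrable_gKer_smul π₁ ht0 ht x
  have hsplit (x₁ : E) :
      gKer d t x x₁ • (t • x₁ - x) = t • (gKer d t x x₁ • x₁) - gKer d t x x₁ • x := by
    rw [smul_sub, smul_comm]
  have htgx : Integrable (fun x₁ => t • (gKer d t x x₁ • x₁)) π₁ := hgx.smul t
  have hF'_int : Integrable (fun x₁ => (1 - t ^ 2)⁻¹ • (gKer d t x x₁ • (t • x₁ - x))) π₁ := by
    simp only [hsplit]
    exact (htgx.sub (hg.smul_const x)).smul (1 - t ^ 2)⁻¹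
  have hF'_integral : ∫ x₁, (1 - t ^ 2)⁻¹ • (gKer d t x x₁ • (t • x₁ - x)) ∂π₁
      = (1 - t ^ 2)⁻¹ • (t • ∫ x₁, gKer d t x x₁ • x₁ ∂π₁ - phiFn d π₁ t x • x) := by
    simp only [hsplit]
    rw [integral_smul, integral_sub htgx (hg.smul_const x), integral_smul,
      integral_smul_const]
    rfl
  have hF'_le (y x₁ : E) : ‖innerSL ℝ ((1 - t ^ 2)⁻¹ • (gKer d t y x₁ • (t • x₁ - y)))‖
      ≤ (1 - t ^ 2)⁻¹ := by
    have hs : 0 ≤ (1 - t ^ 2)⁻¹ := inv_nonneg.2 (by linarith)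
    rw [innerSL_apply_norm, norm_smul, norm_smul, norm_of_nonneg (gKer_pos y x₁).le,
      norm_sub_rev, norm_of_nonneg hs, mul_comm (gKer _ _ _ _)]
    exact mul_le_of_le_one_right hs (norm_sub_smul_mul_gKer_le_one ht y x₁)
  have key := hasFDerivAt_integral_of_dominated_of_fderiv_le (μ := π₁) Filter.univ_mem
    (.of_forall fun y => (continuous_gKer y).aestronglyMeasurable) hg
    (ContinuousLinearMap.continuous _ |>.comp_aestronglyMeasurable hF'_int.aestronglyMeasurable)
    (.of_forall fun x₁ y _ => hF'_le y x₁) (integrable_const _)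
    (.of_forall fun x₁ y _ => hasFDerivAt_gKer x₁ y)
  rwa [ContinuousLinearMap.integral_comp_comm _ hF'_int, hF'_integral] at key

lemma hasGradientAt_log_phiFn [IsFiniteMeasure π₁] [NeZero π₁] (ht0 : 0 < t) (ht : t ^ 2 < 1)
    (x : E) :
    HasGradientAt (fun y => log (phiFn d π₁ t y)) ((1 - t ^ 2)⁻¹ • (t • mFn d π₁ t x - x)) x := by
  have hφ := (phiFn_pos π₁ ht x).ne'
  rw [hasGradientAt_iff_hasFDerivAt]
  refine ((hasFDerivAt_phiFn π₁ ht0 ht x).log hφ).congr_fderiv ?_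
  ext v
  simp [mFn]
  field_simp

theorem velocity_eq_score_form_general
    (d : ℕ)
    (π₁ : Measure (EuclideanSpace ℝ (Fin d))) [IsProbabilityMeasure π₁]
    (t : ℝ) (ht : t ∈ Set.Ioo (0 : ℝ) 1) (x : EuclideanSpace ℝ (Fin d)) :
    DifferentiableAt ℝ (phiFn d π₁ t) x ∧ 0 < phiFn d π₁ t x ∧
      vStar d π₁ x t
        = (1 / t) • gradient (fun y => Real.log (phiFn d π₁ t y)) x + (1 / t) • x := by
  obtain ⟨ht0, ht1⟩ := ht
  have ht : t ^ 2 < 1 := by nlinarith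
  refine ⟨(hasFDerivAt_phiFn π₁ ht0 ht x).differentiableAt, phiFn_pos π₁ ht x, ?_⟩
  rw [(hasGradientAt_log_phiFn π₁ ht0 ht x).gradient, vStar]
  have hs : 1 - t ^ 2 ≠ 0 := by linarith
  match_scalars
  · field_simp
  · field_simp
    ring

/-- For every `t ∈ (0,1)` and every `x`, `φ_t` is differentiable at `x` with strictly
positive value, and `v*(x,t) = (1/t) ∇ₓ log φ_t(x) + (1/t) x`. -/
theorem velocity_eq_score_form
    (d : ℕ) (hd : 1 ≤ d)
    (π₁ : Measure (EuclideanSpace ℝ (Fin d))) [IsProbabilityMeasure π₁]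
    (hsupp : ∀ᵐ x₁ ∂π₁, ∀ i, x₁ i ∈ Set.Icc (0 : ℝ) 1)
    (t : ℝ) (ht : t ∈ Set.Ioo (0 : ℝ) 1) (x : EuclideanSpace ℝ (Fin d)) :
    DifferentiableAt ℝ (phiFn d π₁ t) x ∧ 0 < phiFn d π₁ t x ∧
      vStar d π₁ x t
        = (1 / t) • gradient (fun y => Real.log (phiFn d π₁ t y)) x + (1 / t) • x :=
  velocity_eq_score_form_general d π₁ t ht x
end

section
/- Let T > 0 and γ ≥ 0, and let v*, v̂ : ℝ^d × [0,T] → ℝ^d be such that for every t ∈ [0,T] the map v̂(·, t) is γ-Lipschitz: ‖v̂(x, t) − v̂(y, t)‖ ≤ γ‖x − y‖ for all x, y ∈ ℝ^d. Let X, X̃ : [0,T] → ℝ^d be differentiable curves with continuous derivatives satisfying X'(t) = v*(X(t), t) and X̃'(t) = v̂(X̃(t), t) for all t ∈ [0,T], and X(0) = X̃(0). Then ‖X(T) − X̃(T)‖² ≤ e^{(1+2γ)T} ∫₀^T ‖v*(X(t), t) − v̂(X(t), t)‖² dt. -/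
/-!
The error `D = X - X̃` satisfies `D' = (v*(X) - v̂(X)) + (v̂(X) - v̂(X̃))`, so by Cauchy–Schwarz,
the Lipschitz bound and `2ab ≤ a² + b²`,
`(‖D‖²)' = 2⟪D, D'⟫ ≤ (1 + 2γ)‖D‖² + ‖v*(X) - v̂(X)‖²`.
Integrating the derivative of `e^{-(1+2γ)t}‖D(t)‖²` from `D(0) = 0` gives the bound.
-/

open Set MeasureTheory intervalIntegral

theorem le_exp_mul_add_integral_of_hasDerivWithinAt_le {u u' φ : ℝ → ℝ} {a b c : ℝ}
    (hab : a ≤ b) (hc : 0 ≤ c) (hu : ContinuousOn u (Icc a b))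
    (hderiv : ∀ t ∈ Ioo a b, HasDerivWithinAt u (u' t) (Ioi t) t)
    (hbound : ∀ t ∈ Ioo a b, u' t ≤ c * u t + φ t)
    (hφ : ∀ t ∈ Ioo a b, 0 ≤ φ t) (hφint : IntegrableOn φ (Icc a b)) :
    u b ≤ Real.exp (c * (b - a)) * (u a + ∫ t in a..b, φ t) := by
  set w : ℝ → ℝ := fun t => Real.exp (-c * (t - a))
  have hw : ∀ t, HasDerivAt w (w t * -c) t := fun t => by
    simpa [w] using (((hasDerivAt_id t).sub_const a).const_mul (-c)).exp
  have hw_le_one : ∀ t ∈ Ioo a b, w t ≤ 1 := fun t ht =>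
    Real.exp_le_one_iff.mpr (by nlinarith [ht.1])
  have key : w b * u b - w a * u a ≤ ∫ t in a..b, φ t := by
    refine sub_le_integral_of_hasDeriv_right_of_le hab
      ((continuous_const.mul (continuous_id.sub continuous_const)).rexp.continuousOn.mul hu)
      (fun t ht => ((hw t).hasDerivWithinAt.mul (hderiv t ht))) hφint fun t ht => ?_
    calc w t * -c * u t + w t * u' t = w t * (u' t - c * u t) := by ring
      _ ≤ w t * φ t := by gcongr; linarith [hbound t ht]
      _ ≤ φ t := mul_le_of_le_one_left (hφ t ht) (hw_le_one t ht)
  have hwa : w a = 1 := by simp [w]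
  have hwb : Real.exp (c * (b - a)) * w b = 1 := by
    rw [← Real.exp_add, ← Real.exp_zero]; ring_nf
  calc u b = Real.exp (c * (b - a)) * (w b * u b) := by rw [← mul_assoc, hwb, one_mul]
    _ ≤ Real.exp (c * (b - a)) * (u a + ∫ t in a..b, φ t) := by
      gcongr; rw [hwa, one_mul] at key; linarith

theorem two_inner_add_le_of_norm_le {E : Type*} [NormedAddCommGroup E] [InnerProductSpace ℝ E]
    {γ : ℝ} {x e w : E} (hw : ‖w‖ ≤ γ * ‖x‖) :
    2 * inner ℝ x (e + w) ≤ (1 + 2 * γ) * ‖x‖ ^ 2 + ‖e‖ ^ 2 := by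
  have he : inner ℝ x e ≤ ‖x‖ * ‖e‖ := real_inner_le_norm x e
  have hw' : inner ℝ x w ≤ γ * ‖x‖ ^ 2 := by
    calc inner ℝ x w ≤ ‖x‖ * ‖w‖ := real_inner_le_norm x w
      _ ≤ ‖x‖ * (γ * ‖x‖) := by gcongr
      _ = γ * ‖x‖ ^ 2 := by ring
  rw [inner_add_right]
  nlinarith [sq_nonneg (‖x‖ - ‖e‖)]

theorem flow_stability_gronwall_general
    {d : ℕ}
    (T γ : ℝ) (hT : 0 < T) (hγ : 0 ≤ γ)
    (vstar vhat : EuclideanSpace ℝ (Fin d) → ℝ → EuclideanSpace ℝ (Fin d))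
    (hlip : ∀ t ∈ Set.Icc (0 : ℝ) T, ∀ x y : EuclideanSpace ℝ (Fin d),
      ‖vhat x t - vhat y t‖ ≤ γ * ‖x - y‖)
    (X Xtil : ℝ → EuclideanSpace ℝ (Fin d))
    (hX : ∀ t ∈ Set.Icc (0 : ℝ) T, HasDerivAt X (vstar (X t) t) t)
    (hXtil : ∀ t ∈ Set.Icc (0 : ℝ) T, HasDerivAt Xtil (vhat (Xtil t) t) t)
    (hX0 : X 0 = Xtil 0)
    (hint : IntervalIntegrable (fun t => ‖vstar (X t) t - vhat (X t) t‖ ^ 2)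
      MeasureTheory.volume 0 T) :
    ‖X T - Xtil T‖ ^ 2
      ≤ Real.exp ((1 + 2 * γ) * T) * ∫ t in (0 : ℝ)..T, ‖vstar (X t) t - vhat (X t) t‖ ^ 2 := by
  have hIcc : ∀ t ∈ Ioo 0 T, t ∈ Icc 0 T := fun t ht => Ioo_subset_Icc_self ht
  have hD : ∀ t ∈ Icc 0 T, HasDerivAt (fun s => X s - Xtil s)
      ((vstar (X t) t - vhat (X t) t) + (vhat (X t) t - vhat (Xtil t) t)) t := fun t ht => by
    rw [sub_add_sub_cancel]; exact (hX t ht).sub (hXtil t ht)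
  have hgronwall := le_exp_mul_add_integral_of_hasDerivWithinAt_le hT.le (by positivity)
    (fun t ht => (hD t ht).norm_sq.continuousAt.continuousWithinAt)
    (fun t ht => (hD t (hIcc t ht)).norm_sq.hasDerivWithinAt)
    (fun t ht => two_inner_add_le_of_norm_le (hlip t (hIcc t ht) _ _))
    (fun t _ => by positivity) ((intervalIntegrable_iff_integrableOn_Icc_of_le hT.le).mp hint)
  simpa [hX0] using hgronwall

/-- **Stability of the flow ODE (Grönwall estimate).**  If `v̂(·,t)` is `γ`-Lipschitz for
every `t ∈ [0,T]`, `X` solves `X' = v*(X,t)`, `X̃` solves `X̃' = v̂(X̃,t)`, both with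
continuous derivatives on `[0,T]` and the same initial point, then
`‖X(T) - X̃(T)‖² ≤ e^{(1+2γ)T} ∫₀^T ‖v*(X(t),t) - v̂(X(t),t)‖² dt`. -/
theorem flow_stability_gronwall
    {d : ℕ} (hd : 1 ≤ d)
    (T γ : ℝ) (hT : 0 < T) (hγ : 0 ≤ γ)
    (vstar vhat : EuclideanSpace ℝ (Fin d) → ℝ → EuclideanSpace ℝ (Fin d))
    (hlip : ∀ t ∈ Set.Icc (0 : ℝ) T, ∀ x y : EuclideanSpace ℝ (Fin d),
      ‖vhat x t - vhat y t‖ ≤ γ * ‖x - y‖)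
    (X Xtil : ℝ → EuclideanSpace ℝ (Fin d))
    (hX : ∀ t ∈ Set.Icc (0 : ℝ) T, HasDerivAt X (vstar (X t) t) t)
    (hXtil : ∀ t ∈ Set.Icc (0 : ℝ) T, HasDerivAt Xtil (vhat (Xtil t) t) t)
    (hX0 : X 0 = Xtil 0)
    (hcontX : ContinuousOn (fun t => vstar (X t) t) (Set.Icc 0 T))
    (hcontXtil : ContinuousOn (fun t => vhat (Xtil t) t) (Set.Icc 0 T))
    (hint : IntervalIntegrable (fun t => ‖vstar (X t) t - vhat (X t) t‖ ^ 2)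
      MeasureTheory.volume 0 T) :
    ‖X T - Xtil T‖ ^ 2
      ≤ Real.exp ((1 + 2 * γ) * T) * ∫ t in (0 : ℝ)..T, ‖vstar (X t) t - vhat (X t) t‖ ^ 2 :=
  flow_stability_gronwall_general T γ hT hγ vstar vhat hlip X Xtil hX hXtil hX0 hint
end

section
/- Let T > 0, B ≥ 0, γ_x ≥ 0, γ_t ≥ 0, and let v̂ : ℝ^d × [0,T] → ℝ^d satisfy ‖v̂(x, t)‖ ≤ B for all x, t; ‖v̂(x, t) − v̂(y, t)‖ ≤ γ_x ‖x − y‖ for all x, y ∈ ℝ^d and t ∈ [0,T]; and ‖v̂(x, s) − v̂(x, t)‖ ≤ γ_t |s − t| for all x ∈ ℝ^d and s, t ∈ [0,T]. Let 0 = t₀ < t₁ < ⋯ < t_N = T be discretization points. Let X̃ : [0,T] → ℝ^d be differentiable with X̃'(t) = v̂(X̃(t), t) for all t, and let X̂ : [0,T] → ℝ^d be the explicit Euler interpolation: X̂(t) = X̂(t_k) + (t − t_k) v̂(X̂(t_k), t_k) for t ∈ [t_k, t_{k+1}], k = 0, …, N−1, with X̂(0) = X̃(0). Then ‖X̃(T)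 − X̂(T)‖² ≤ (1/3) e^{2(γ_x + 1)T} (γ_x² B² + γ_t²) Σ_{k=0}^{N−1} (t_{k+1} − t_k)³. -/
/-!
On a step `[tₖ, tₖ₊₁]` the error `e = X̃ - X̂` satisfies
`‖e'(t)‖ ≤ γₓ ‖e(t)‖ + (γₓ B + γₜ)(t - tₖ)`, because the Euler velocity is frozen at
`(X̂(tₖ), tₖ)` while `X̂` moves by at most `B (t - tₖ)`. Grönwall's inequality with this linearly
growing forcing term bounds the error created on the step by `(γₓ B + γₜ)/2 · hₖ²`, up to a factor
`e^{γₓ hₖ}`; chaining the steps, `‖e(T)‖ ≤ (γₓ B + γₜ)/2 · e^{γₓ T} Σ hₖ²`. Squaring and using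
Cauchy–Schwarz `(Σ hₖ²)² ≤ T Σ hₖ³`, `(γₓ B + γₜ)² ≤ 2 (γₓ² B² + γₜ²)` and `T/2 ≤ e^{2T}/3`
gives the claim.
-/

open Set Finset Real

theorem norm_le_of_norm_deriv_right_le_mul_norm_add_linear {E : Type*} [NormedAddCommGroup E]
    [NormedSpace ℝ E] {f f' : ℝ → E} {a b K c : ℝ} (hK : 0 ≤ K) (hc : 0 ≤ c)
    (hf : ContinuousOn f (Icc a b)) (hf' : ∀ x ∈ Ico a b, HasDerivWithinAt f (f' x) (Ici x) x)
    (bound : ∀ x ∈ Ico a b, ‖f' x‖ ≤ K * ‖f x‖ + c * (x - a)) :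
    ∀ x ∈ Icc a b, ‖f x‖ ≤ (‖f a‖ + c / 2 * (x - a) ^ 2) * exp (K * (x - a)) := by
  intro x hx
  -- the extra term `ε (t - a)` makes the comparison strict at the boundary
  have hbarrier : ∀ ε > 0, ‖f x‖ ≤ (‖f a‖ + ε * (x - a) + c / 2 * (x - a) ^ 2) * exp (K * (x - a)) := by
    intro ε hε
    set g : ℝ → ℝ := fun t => (‖f a‖ + ε * (t - a) + c / 2 * (t - a) ^ 2) * exp (K * (t - a))
    have hg : ∀ t, HasDerivAt g ((ε + c * (t - a)) * exp (K * (t - a)) + K * g t) t := by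
      intro t
      have hlin := (hasDerivAt_id' t).sub_const a
      refine ((((hlin.const_mul ε).const_add ‖f a‖).add ((hlin.pow 2).const_mul (c / 2))).mul
        (hlin.const_mul K).exp).congr_deriv ?_
      simp only [g, Pi.add_apply, Pi.pow_apply]
      push_cast
      ring
    refine image_norm_le_of_norm_deriv_right_lt_deriv_boundary hf hf' (by simp [g]) hg ?_ hx
    intro t ht hft
    have hta : 0 ≤ t - a := sub_nonneg.2 ht.1
    calc ‖f' t‖ ≤ K * g t + c * (t - a) := hft ▸ bound t ht
      _ < (ε + c * (t - a)) * exp (K * (t - a)) + K * g t := by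
        have : c * (t - a) < (ε + c * (t - a)) * exp (K * (t - a)) :=
          (lt_add_of_pos_left _ hε).trans_le
            (le_mul_of_one_le_right (by positivity) (one_le_exp (by positivity)))
        linarith
  have hcont : ContinuousWithinAt
      (fun ε => (‖f a‖ + ε * (x - a) + c / 2 * (x - a) ^ 2) * exp (K * (x - a))) (Ioi 0) 0 := by
    fun_prop
  simpa using ge_of_tendsto hcont (eventually_nhdsWithin_of_forall hbarrier)

theorem norm_sub_euler_step_le {E : Type*} [NormedAddCommGroup E] [NormedSpace ℝ E]
    {v : E → ℝ → E} {X : ℝ → E} {x₀ : E} {a b B γx γt : ℝ} (hγx : 0 ≤ γx) (hγt : 0 ≤ γt)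
    (hbound : ‖v x₀ a‖ ≤ B) (hlipx : ∀ t ∈ Icc a b, ∀ x y, ‖v x t - v y t‖ ≤ γx * ‖x - y‖)
    (hlipt : ∀ t ∈ Icc a b, ‖v x₀ t - v x₀ a‖ ≤ γt * (t - a))
    (hX : ∀ t ∈ Icc a b, HasDerivAt X (v (X t) t) t) :
    ∀ t ∈ Icc a b, ‖X t - (x₀ + (t - a) • v x₀ a)‖
      ≤ (‖X a - x₀‖ + (γx * B + γt) / 2 * (t - a) ^ 2) * exp (γx * (t - a)) := by
  set w := v x₀ a
  set y : ℝ → E := fun t => x₀ + (t - a) • w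
  have hy : ∀ t, HasDerivAt y w t := fun t => by
    simpa [y] using (((hasDerivAt_id t).sub_const a).smul_const w).const_add x₀
  have hdrift : ∀ t ∈ Icc a b, ‖v (X t) t - w‖ ≤ γx * ‖X t - y t‖ + (γx * B + γt) * (t - a) := by
    intro t ht
    have hta : 0 ≤ t - a := sub_nonneg.2 ht.1
    have hyx₀ : ‖y t - x₀‖ ≤ (t - a) * B := by
      simpa [y, norm_smul, abs_of_nonneg hta] using mul_le_mul_of_nonneg_left hbound hta
    calc ‖v (X t) t - w‖
        ≤ ‖v (X t) t - v (y t) t‖ + (‖v (y t) t - v x₀ t‖ + ‖v x₀ t - w‖) :=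
          (norm_sub_le_norm_sub_add_norm_sub _ (v (y t) t) _).trans
            (by gcongr; exact norm_sub_le_norm_sub_add_norm_sub _ _ _)
      _ ≤ γx * ‖X t - y t‖ + (γx * ((t - a) * B) + γt * (t - a)) := by
          gcongr
          · exact hlipx t ht _ _
          · exact (hlipx t ht _ _).trans (by gcongr)
          · exact hlipt t ht
      _ = γx * ‖X t - y t‖ + (γx * B + γt) * (t - a) := by ring
  have hB : 0 ≤ B := (norm_nonneg _).trans hbound
  simpa [y] using norm_le_of_norm_deriv_right_le_mul_norm_add_linear hγx (by positivity)
    (fun t ht => ((hX t ht).sub (hy t)).continuousAt.continuousWithinAt)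
    (fun t ht => ((hX t (Ico_subset_Icc_self ht)).sub (hy t)).hasDerivWithinAt)
    (fun t ht => hdrift t (Ico_subset_Icc_self ht))

theorem mem_Icc_of_forall_le_succ {α : Type*} [Preorder α] {t : ℕ → α} {n : ℕ}
    (ht : ∀ k < n, t k ≤ t (k + 1)) {k : ℕ} (hk : k ≤ n) : t k ∈ Icc (t 0) (t n) := by
  have hmono : MonotoneOn t (Set.Iic n) :=
    monotoneOn_of_le_succ Set.ordConnected_Iic fun k _ _ hk₁ => ht k (by simpa using hk₁)
  exact ⟨hmono (Nat.zero_le n) hk (Nat.zero_le k), hmono hk (le_refl n) hk⟩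

theorem le_sum_mul_exp_of_le_add_mul_exp {u d t : ℕ → ℝ} {K : ℝ} {n : ℕ} (h₀ : u 0 ≤ 0)
    (hstep : ∀ k < n, u (k + 1) ≤ (u k + d k) * exp (K * (t (k + 1) - t k))) :
    u n ≤ ∑ k ∈ range n, d k * exp (K * (t n - t k)) := by
  induction n with
  | zero => simpa using h₀
  | succ n ih =>
    calc u (n + 1)
        ≤ (u n + d n) * exp (K * (t (n + 1) - t n)) := hstep n n.lt_succ_self
      _ ≤ (∑ k ∈ range n, d k * exp (K * (t n - t k)) + d n) * exp (K * (t (n + 1) - t n)) := by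
          gcongr
          exact ih fun k hk => hstep k (hk.trans n.lt_succ_self)
      _ = ∑ k ∈ range (n + 1), d k * exp (K * (t (n + 1) - t k)) := by
          rw [sum_range_succ, add_mul, sum_mul]
          congr 1
          exact sum_congr rfl fun k _ => by rw [mul_assoc, ← exp_add]; ring_nf

theorem le_mul_exp_mul_sum_sq_of_le_add_mul_sq_mul_exp {u t : ℕ → ℝ} {C K : ℝ} {n : ℕ}
    (hC : 0 ≤ C) (hK : 0 ≤ K) (ht : ∀ k < n, t k ≤ t (k + 1)) (h₀ : u 0 ≤ 0)
    (hstep : ∀ k < n, u (k + 1) ≤ (u k + C * (t (k + 1) - t k) ^ 2) * exp (K * (t (k + 1) - t k))) :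
    u n ≤ C * exp (K * (t n - t 0)) * ∑ k ∈ range n, (t (k + 1) - t k) ^ 2 :=
  calc u n ≤ ∑ k ∈ range n, C * (t (k + 1) - t k) ^ 2 * exp (K * (t n - t k)) :=
        le_sum_mul_exp_of_le_add_mul_exp h₀ hstep
    _ ≤ ∑ k ∈ range n, C * (t (k + 1) - t k) ^ 2 * exp (K * (t n - t 0)) := by
        gcongr with k hk
        exact (mem_Icc_of_forall_le_succ ht (mem_range.1 hk).le).1
    _ = _ := by rw [← sum_mul, ← mul_sum]; ring

theorem sq_sum_sq_sub_le_mul_sum_cube_sub {t : ℕ → ℝ} {n : ℕ} (ht : ∀ k < n, t k ≤ t (k + 1)) :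
    (∑ k ∈ range n, (t (k + 1) - t k) ^ 2) ^ 2
      ≤ (t n - t 0) * ∑ k ∈ range n, (t (k + 1) - t k) ^ 3 := by
  have hh : ∀ k ∈ range n, 0 ≤ t (k + 1) - t k := fun k hk => sub_nonneg.2 (ht k (mem_range.1 hk))
  rw [← sum_range_sub t n]
  exact sum_sq_le_sum_mul_sum_of_sq_le_mul _ hh (fun k hk => pow_nonneg (hh k hk) 3)
    fun k _ => le_of_eq (by ring)

theorem sq_half_mul_exp_mul_sum_sq_le {t : ℕ → ℝ} {n : ℕ} {T B γx γt : ℝ}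
    (ht : ∀ k < n, t k ≤ t (k + 1)) (ht₀ : t 0 = 0) (htn : t n = T) :
    ((γx * B + γt) / 2 * exp (γx * T) * ∑ k ∈ range n, (t (k + 1) - t k) ^ 2) ^ 2
      ≤ 1 / 3 * exp (2 * (γx + 1) * T) * (γx ^ 2 * B ^ 2 + γt ^ 2)
        * ∑ k ∈ range n, (t (k + 1) - t k) ^ 3 := by
  have hT : 0 ≤ T := htn ▸ ht₀ ▸ (mem_Icc_of_forall_le_succ ht le_rfl).1
  have hCS := sq_sum_sq_sub_le_mul_sum_cube_sub ht
  rw [ht₀, htn, sub_zero] at hCS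
  have hexp : T / 2 ≤ 1 / 3 * exp (2 * T) := by linarith [add_one_le_exp (2 * T)]
  calc _ = ((γx * B + γt) / 2) ^ 2 * exp (γx * T) ^ 2
          * (∑ k ∈ range n, (t (k + 1) - t k) ^ 2) ^ 2 := by ring
    _ ≤ (γx ^ 2 * B ^ 2 + γt ^ 2) / 2 * exp (γx * T) ^ 2
          * (T * ∑ k ∈ range n, (t (k + 1) - t k) ^ 3) := by
        gcongr
        linarith [add_sq_le (a := γx * B) (b := γt)]
    _ = T / 2 * (exp (γx * T) ^ 2 * (γx ^ 2 * B ^ 2 + γt ^ 2)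
          * ∑ k ∈ range n, (t (k + 1) - t k) ^ 3) := by ring
    _ ≤ 1 / 3 * exp (2 * T) * (exp (γx * T) ^ 2 * (γx ^ 2 * B ^ 2 + γt ^ 2)
          * ∑ k ∈ range n, (t (k + 1) - t k) ^ 3) := by
        gcongr
        exact mul_nonneg (by positivity)
          (sum_nonneg fun k hk => pow_nonneg (sub_nonneg.2 (ht k (mem_range.1 hk))) 3)
    _ = _ := by
        rw [show 2 * (γx + 1) * T = 2 * T + γx * T + γx * T by ring, exp_add, exp_add]
        ring

theorem euler_discretization_error_general
    {d : ℕ}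
    (T B γx γt : ℝ) (hB : 0 ≤ B) (hγx : 0 ≤ γx) (hγt : 0 ≤ γt)
    (vhat : EuclideanSpace ℝ (Fin d) → ℝ → EuclideanSpace ℝ (Fin d))
    (hbound : ∀ x : EuclideanSpace ℝ (Fin d), ∀ t ∈ Set.Icc (0 : ℝ) T, ‖vhat x t‖ ≤ B)
    (hlipx : ∀ t ∈ Set.Icc (0 : ℝ) T, ∀ x y : EuclideanSpace ℝ (Fin d),
      ‖vhat x t - vhat y t‖ ≤ γx * ‖x - y‖)
    (hlipt : ∀ x : EuclideanSpace ℝ (Fin d), ∀ s ∈ Set.Icc (0 : ℝ) T, ∀ t ∈ Set.Icc (0 : ℝ) T,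
      ‖vhat x s - vhat x t‖ ≤ γt * |s - t|)
    (N : ℕ) (tk : ℕ → ℝ)
    (htk0 : tk 0 = 0) (htkN : tk N = T)
    (htkmono : ∀ k < N, tk k < tk (k + 1))
    (Xtil Xhat : ℝ → EuclideanSpace ℝ (Fin d))
    (hXtil : ∀ t ∈ Set.Icc (0 : ℝ) T, HasDerivAt Xtil (vhat (Xtil t) t) t)
    (hXhat : ∀ k < N, ∀ s ∈ Set.Icc (tk k) (tk (k + 1)),
      Xhat s = Xhat (tk k) + (s - tk k) • vhat (Xhat (tk k)) (tk k))
    (hinit : Xhat 0 = Xtil 0) :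
    ‖Xtil T - Xhat T‖ ^ 2
      ≤ (1 / 3) * Real.exp (2 * (γx + 1) * T) * (γx ^ 2 * B ^ 2 + γt ^ 2) *
          ∑ k ∈ Finset.range N, (tk (k + 1) - tk k) ^ 3 := by
  have hle : ∀ k < N, tk k ≤ tk (k + 1) := fun k hk => (htkmono k hk).le
  have hstep : ∀ k < N, ‖Xtil (tk (k + 1)) - Xhat (tk (k + 1))‖
      ≤ (‖Xtil (tk k) - Xhat (tk k)‖ + (γx * B + γt) / 2 * (tk (k + 1) - tk k) ^ 2)
        * exp (γx * (tk (k + 1) - tk k)) := by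
    intro k hk
    have hsub : Icc (tk k) (tk (k + 1)) ⊆ Icc 0 T := htk0 ▸ htkN ▸
      Icc_subset_Icc (mem_Icc_of_forall_le_succ hle hk.le).1 (mem_Icc_of_forall_le_succ hle hk).2
    have hk₀ := hsub (Set.left_mem_Icc.2 (hle k hk))
    have hk₁ := Set.right_mem_Icc.2 (hle k hk)
    rw [hXhat k hk _ hk₁]
    exact norm_sub_euler_step_le hγx hγt (hbound _ _ hk₀) (fun t ht => hlipx t (hsub ht))
      (fun t ht => abs_of_nonneg (sub_nonneg.2 ht.1) ▸ hlipt _ t (hsub ht) _ hk₀)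
      (fun t ht => hXtil t (hsub ht)) _ hk₁
  have herr := le_mul_exp_mul_sum_sq_of_le_add_mul_sq_mul_exp
    (u := fun k => ‖Xtil (tk k) - Xhat (tk k)‖) (by positivity) hγx hle
    (by simp [htk0, hinit]) hstep
  rw [htk0, htkN, sub_zero] at herr
  exact (pow_le_pow_left₀ (norm_nonneg _) herr 2).trans
    (sq_half_mul_exp_mul_sum_sq_le hle htk0 htkN)

/-- **Euler discretization error.**  Let `v̂` be bounded by `B`, `γₓ`-Lipschitz in `x` and
`γₜ`-Lipschitz in `t` on `ℝ^d × [0,T]`, let `0 = t₀ < t₁ < ⋯ < t_N = T` be discretization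
points, let `X̃` solve `X̃' = v̂(X̃,t)` and let `X̂` be the explicit Euler interpolation with
the same starting point.  Then
`‖X̃(T) - X̂(T)‖² ≤ (1/3) e^{2(γₓ+1)T} (γₓ²B² + γₜ²) Σ_k (t_{k+1} - t_k)³`. -/
theorem euler_discretization_error
    {d : ℕ} (hd : 1 ≤ d)
    (T B γx γt : ℝ) (hT : 0 < T) (hB : 0 ≤ B) (hγx : 0 ≤ γx) (hγt : 0 ≤ γt)
    (vhat : EuclideanSpace ℝ (Fin d) → ℝ → EuclideanSpace ℝ (Fin d))
    (hbound : ∀ x : EuclideanSpace ℝ (Fin d), ∀ t ∈ Set.Icc (0 : ℝ) T, ‖vhat x t‖ ≤ B)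
    (hlipx : ∀ t ∈ Set.Icc (0 : ℝ) T, ∀ x y : EuclideanSpace ℝ (Fin d),
      ‖vhat x t - vhat y t‖ ≤ γx * ‖x - y‖)
    (hlipt : ∀ x : EuclideanSpace ℝ (Fin d), ∀ s ∈ Set.Icc (0 : ℝ) T, ∀ t ∈ Set.Icc (0 : ℝ) T,
      ‖vhat x s - vhat x t‖ ≤ γt * |s - t|)
    (N : ℕ) (hN : 0 < N) (tk : ℕ → ℝ)
    (htk0 : tk 0 = 0) (htkN : tk N = T)
    (htkmono : ∀ k < N, tk k < tk (k + 1))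
    (Xtil Xhat : ℝ → EuclideanSpace ℝ (Fin d))
    (hXtil : ∀ t ∈ Set.Icc (0 : ℝ) T, HasDerivAt Xtil (vhat (Xtil t) t) t)
    (hXhat : ∀ k < N, ∀ s ∈ Set.Icc (tk k) (tk (k + 1)),
      Xhat s = Xhat (tk k) + (s - tk k) • vhat (Xhat (tk k)) (tk k))
    (hinit : Xhat 0 = Xtil 0) :
    ‖Xtil T - Xhat T‖ ^ 2
      ≤ (1 / 3) * Real.exp (2 * (γx + 1) * T) * (γx ^ 2 * B ^ 2 + γt ^ 2) *
          ∑ k ∈ Finset.range N, (tk (k + 1) - tk k) ^ 3 :=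
  euler_discretization_error_general T B γx γt hB hγx hγt vhat hbound hlipx hlipt N tk htk0 htkN
    htkmono Xtil Xhat hXtil hXhat hinit
end
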